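/- arXiv:2112.11320 — 3 statements merged into one kernel-verified Lean document; each statement's English description precedes it below -/
import Mathlib

section
/- Let b^LAB be the unique cross-conditional regret minimizing bid in the multi-unit uniform-price auction and let b^PAB be the unique minimax-loss bid in the multi-unit pay-as-bid auction. Then b^LAB is on average steeper than b^PAB: (b^LAB_1 − b^LAB_M)/M ≥ (b^PAB_1 − b^PAB_M)/M. In fact b^LAB_M = b^PAB_M = v_M/(M+1) and b^LAB_1 ≥ b^PAB_1. -/
noncomputable section

/-- Positive part `(x)₊ = max(x,0)`. -/
def pos (x : ℝ) : ℝ := max x 0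

/-- A bid vector for `M` units: weakly decreasing on `{1,…,M}` and nonnegative at `M`. -/
def IsBid (M : ℕ) (b : ℕ → ℝ) : Prop :=
  (∀ k, 1 ≤ k → k < M → b (k + 1) ≤ b k) ∧ 0 ≤ b M

/-- A value vector for `M` units: weakly decreasing on `{1,…,M}` and nonnegative at `M`. -/
def IsVal (M : ℕ) (v : ℕ → ℝ) : Prop :=
  (∀ k, 1 ≤ k → k < M → v (k + 1) ≤ v k) ∧ 0 ≤ v M

/-- Extension of the bid vector by the convention `b_{M+1} = 0`. -/
def bext (M : ℕ) (b : ℕ → ℝ) (k : ℕ) : ℝ := if k ≤ M then b k else 0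

/-- Conditional regret at quantity `k ∈ {0,…,M}` in the multi-unit pay-as-bid auction:
`R_k(b) = Σ_{j=1}^k (b_j − b_{k+1}) + Σ_{j=k+1}^M (v_j − b_{k+1})₊`. -/
def Rpab (M : ℕ) (v b : ℕ → ℝ) (k : ℕ) : ℝ :=
  (∑ j ∈ Finset.Icc 1 k, (b j - bext M b (k + 1)))
    + ∑ j ∈ Finset.Icc (k + 1) M, pos (v j - bext M b (k + 1))

/-- Maximum loss in the multi-unit pay-as-bid auction: `L^PAB(b) = max_{0 ≤ k ≤ M} R_k(b)`. -/
def Lpab (M : ℕ) (v b : ℕ → ℝ) : ℝ :=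
  (Finset.Icc 0 M).sup' (Finset.nonempty_Icc.mpr (Nat.zero_le M)) (Rpab M v b)

/-- A minimax-loss bid in the multi-unit pay-as-bid auction. -/
def IsMinimaxPAB (M : ℕ) (v b : ℕ → ℝ) : Prop :=
  IsBid M b ∧ ∀ b', IsBid M b' → Lpab M v b ≤ Lpab M v b'
/-- Overbidding regret at quantity `k ∈ {1,…,M}` in the multi-unit uniform-price auction:
`O_k(b) = k·b_k`. -/
def Olab (b : ℕ → ℝ) (k : ℕ) : ℝ := (k : ℝ) * b k

/-- Underbidding regret at quantity `k − 1` in the multi-unit uniform-price auction: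
`U_{k−1}(b) = Σ_{j=k}^M (v_j − b_k)₊`. -/
def Ulab (M : ℕ) (v b : ℕ → ℝ) (k : ℕ) : ℝ :=
  ∑ j ∈ Finset.Icc k M, pos (v j - b k)

/-- Maximum loss in the multi-unit uniform-price auction:
`L^LAB(b) = max_{1 ≤ k ≤ M} max(O_k(b), U_{k−1}(b))`. -/
def Llab (M : ℕ) (hM : 1 ≤ M) (v b : ℕ → ℝ) : ℝ :=
  (Finset.Icc 1 M).sup' (Finset.nonempty_Icc.mpr hM)
    (fun k => max (Olab b k) (Ulab M v b k))

/-- A cross-conditional regret minimizing bid: `k·b_k = Σ_{j=k}^M (v_j − b_k)₊` for all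
`k ∈ {1,…,M}`. -/
def IsCrossCond (M : ℕ) (v b : ℕ → ℝ) : Prop :=
  ∀ k ∈ Finset.Icc 1 M, (k : ℝ) * b k = ∑ j ∈ Finset.Icc k M, pos (v j - b k)

/-- A minimax-loss bid in the multi-unit uniform-price auction. -/
def IsMinimaxLAB (M : ℕ) (hM : 1 ≤ M) (v b : ℕ → ℝ) : Prop :=
  IsBid M b ∧ ∀ b', IsBid M b' → Llab M hM v b ≤ Llab M hM v b'

/-!
Write `G_k(x) = Σ_{j=k}^M (v_j − x)₊ − k x`; it is strictly decreasing for `k ≥ 1`. For `k < M` the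
pay-as-bid regret reads `R_k(b) = Σ_{j≤k} b_j + b_{k+1} + G_{k+1}(b_{k+1})`, so the bid `β` built from
the top down by `G_k(β_k) = Σ_{j>k} β_j` makes every conditional regret equal to `Σ_j β_j`.
Conversely, if all `R_k(b) ≤ Σ_j β_j`, comparing `R_0, R_1, …` in turn gives `β_j ≤ b_j` for every `j`,
because `x + G_{k+1}(x)` exceeds its value at `β_{k+1}` whenever `x < β_{k+1}` (for `k = 0` since
some `v_j ≥ β_1`); then `R_M(b) = Σ_j b_j ≤ Σ_j β_j` forces `b = β`: the minimax-loss bid is `β`.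
The cross-conditional bid solves `G_k(b_k) = 0` instead. At `k = M` both equations read
`(v_M − x)₊ = M x`, whence `x = v_M/(M+1)`; at `k = 1`, `G_1(β_1) ≥ 0 = G_1(b^LAB_1)` gives
`β_1 ≤ b^LAB_1`.
-/

open Finset Function

lemma pos_nonneg (x : ℝ) : 0 ≤ pos x := le_max_right _ _

lemma le_pos (x : ℝ) : x ≤ pos x := le_max_left _ _

lemma pos_eq_self {x : ℝ} (h : 0 ≤ x) : pos x = x := max_eq_left h

lemma pos_eq_zero {x : ℝ} (h : x ≤ 0) : pos x = 0 := max_eq_right h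

lemma pos_sub_le_pos_sub (a : ℝ) {x y : ℝ} (h : x ≤ y) : pos (a - y) ≤ pos (a - x) :=
  max_le_max_right 0 (sub_le_sub_left h a)

lemma sum_Icc_eq_add_sum_Icc_succ {k n : ℕ} (h : k ≤ n) (f : ℕ → ℝ) :
    ∑ j ∈ Icc k n, f j = f k + ∑ j ∈ Icc (k + 1) n, f j := by
  rw [Icc_add_one_left_eq_Ioc, add_sum_Ioc_eq_sum_Icc h]

lemma sum_Icc_one_add_sum_Icc_succ {k n : ℕ} (h : k ≤ n) (f : ℕ → ℝ) :
    ∑ j ∈ Icc 1 k, f j + ∑ j ∈ Icc (k + 1) n, f j = ∑ j ∈ Icc 1 n, f j := by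
  have hIcc : ∀ m, Icc 1 m = Ioc 0 m := Icc_add_one_left_eq_Ioc 0
  rw [Icc_add_one_left_eq_Ioc, hIcc, hIcc, sum_Ioc_consecutive f (Nat.zero_le k) h]

lemma IsBid.le_of_le {M : ℕ} {b : ℕ → ℝ} (hb : IsBid M b) {i j : ℕ} (hi : 1 ≤ i) (hij : i ≤ j)
    (hj : j ≤ M) : b j ≤ b i := by
  induction j, hij using Nat.le_induction with
  | base => exact le_rfl
  | succ j hij ih => exact (hb.1 j (hi.trans hij) hj).trans (ih (by omega))

lemma IsBid.nonneg {M : ℕ} {b : ℕ → ℝ} (hb : IsBid M b) {j : ℕ} (h1 : 1 ≤ j) (hj : j ≤ M) :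
    0 ≤ b j :=
  hb.2.trans (hb.le_of_le h1 hj le_rfl)

section CrossGap

variable (M : ℕ) (v : ℕ → ℝ)

def crossGap (k : ℕ) (x : ℝ) : ℝ :=
  ∑ j ∈ Icc k M, pos (v j - x) - (k : ℝ) * x

lemma crossGap_self (x : ℝ) : crossGap M v M x = pos (v M - x) - M * x := by
  simp [crossGap]

lemma crossGap_eq_pos_add {k : ℕ} (hk : k ≤ M) (x : ℝ) :
    crossGap M v k x = pos (v k - x) + (x + crossGap M v (k + 1) x) := by
  rw [crossGap, crossGap, sum_Icc_eq_add_sum_Icc_succ hk]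
  push_cast
  ring

lemma crossGap_add_mul_le (k : ℕ) {x y : ℝ} (hxy : x ≤ y) :
    crossGap M v k y + k * (y - x) ≤ crossGap M v k x := by
  have := sum_le_sum fun j (_ : j ∈ Icc k M) => pos_sub_le_pos_sub (v j) hxy
  rw [crossGap, crossGap]
  linarith

lemma strictAnti_crossGap {k : ℕ} (hk : 1 ≤ k) : StrictAnti (crossGap M v k) := by
  intro x y hxy
  have := crossGap_add_mul_le M v k hxy.le
  have hk' : (1 : ℝ) ≤ k := by exact_mod_cast hk
  nlinarith

lemma continuous_crossGap (k : ℕ) : Continuous (crossGap M v k) := by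
  unfold crossGap pos
  fun_prop

lemma crossGap_surjective {k : ℕ} (hk : 1 ≤ k) : Surjective (crossGap M v k) := by
  intro s
  set t := |s - crossGap M v k 0|
  have hk' : (1 : ℝ) ≤ k := by exact_mod_cast hk
  have ht : 0 ≤ t := abs_nonneg _
  have hright : crossGap M v k t ≤ s := by
    have := crossGap_add_mul_le M v k ht
    have := neg_abs_le (s - crossGap M v k 0)
    nlinarith
  have hleft : s ≤ crossGap M v k (-t) := by
    have := crossGap_add_mul_le M v k (neg_nonpos.2 ht)
    have := le_abs_self (s - crossGap M v k 0)
    nlinarith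
  obtain ⟨x, -, hx⟩ := intermediate_value_Icc' (neg_le_self ht)
    (continuous_crossGap M v k).continuousOn ⟨hright, hleft⟩
  exact ⟨x, hx⟩

end CrossGap

lemma IsCrossCond.crossGap_eq_zero {M : ℕ} {v b : ℕ → ℝ} (h : IsCrossCond M v b) {k : ℕ}
    (hk : k ∈ Icc 1 M) : crossGap M v k (b k) = 0 := by
  rw [crossGap, ← h k hk, sub_self]

lemma eq_div_of_crossGap_self_eq_zero {M : ℕ} {v : ℕ → ℝ} (hM : 1 ≤ M) (hvM : 0 ≤ v M) {x : ℝ}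
    (h : crossGap M v M x = 0) : x = v M / (M + 1) := by
  have hM' : (1 : ℝ) ≤ M := by exact_mod_cast hM
  rw [crossGap_self] at h
  rcases le_total x (v M) with hx | hx
  · rw [pos_eq_self (sub_nonneg.2 hx)] at h
    field_simp
    linarith
  · rw [pos_eq_zero (sub_nonpos.2 hx)] at h
    have hx0 : x = 0 := by nlinarith
    have hv0 : v M = 0 := by linarith
    simp [hx0, hv0]

section EqualizingBid

variable (M : ℕ) (v : ℕ → ℝ)

/-- Built from the top unit down: `equalizingTail M v d` is the sum of the top `d` bids, and the bid
for unit `k` solves `crossGap M v k x = Σ_{j>k} β_j`. -/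
def equalizingTail : ℕ → ℝ
  | 0 => 0
  | d + 1 => equalizingTail d + invFun (crossGap M v (M - d)) (equalizingTail d)

def equalizingBid (k : ℕ) : ℝ :=
  invFun (crossGap M v k) (equalizingTail M v (M - k))

lemma equalizingTail_eq_sum {d : ℕ} (hd : d ≤ M) :
    equalizingTail M v d = ∑ j ∈ Icc (M - d + 1) M, equalizingBid M v j := by
  induction d with
  | zero => simp [equalizingTail]
  | succ d ih =>
    rw [equalizingTail, show M - (d + 1) + 1 = M - d by omega,
      sum_Icc_eq_add_sum_Icc_succ (Nat.sub_le M d), equalizingBid, Nat.sub_sub_self (by omega),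
      ih (by omega)]
    ring

lemma crossGap_equalizingBid {k : ℕ} (hk : 1 ≤ k) (hkM : k ≤ M) :
    crossGap M v k (equalizingBid M v k) = ∑ j ∈ Icc (k + 1) M, equalizingBid M v j := by
  rw [equalizingBid, invFun_eq (crossGap_surjective M v hk _),
    equalizingTail_eq_sum M v (Nat.sub_le M k), Nat.sub_sub_self hkM]

lemma equalizingBid_succ_le {k : ℕ} (hk : 1 ≤ k) (hkM : k < M) :
    equalizingBid M v (k + 1) ≤ equalizingBid M v k := by
  refine (strictAnti_crossGap M v hk).le_iff_ge.1 ?_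
  rw [crossGap_eq_pos_add M v hkM.le (equalizingBid M v (k + 1)),
    crossGap_equalizingBid M v hk hkM.le, crossGap_equalizingBid M v (by omega) hkM, sum_Icc_eq_add_sum_Icc_succ hkM]
  linarith [pos_nonneg (v k - equalizingBid M v (k + 1))]

lemma isBid_equalizingBid (hM : 1 ≤ M) : IsBid M (equalizingBid M v) := by
  refine ⟨fun k hk hkM => equalizingBid_succ_le M v hk hkM, ?_⟩
  have h := crossGap_equalizingBid M v hM le_rfl
  rw [crossGap_self, Icc_eq_empty (by omega), sum_empty] at h
  have hM' : (1 : ℝ) ≤ M := by exact_mod_cast hM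
  nlinarith [pos_nonneg (v M - equalizingBid M v M)]

lemma crossGap_equalizingBid_one_nonneg (hM : 1 ≤ M) :
    0 ≤ crossGap M v 1 (equalizingBid M v 1) := by
  rw [crossGap_equalizingBid M v le_rfl hM]
  exact sum_nonneg fun j hj =>
    (isBid_equalizingBid M v hM).nonneg (Nat.le_of_succ_le (mem_Icc.1 hj).1) (mem_Icc.1 hj).2

lemma equalizingBid_self (hM : 1 ≤ M) (hvM : 0 ≤ v M) : equalizingBid M v M = v M / (M + 1) := by
  refine eq_div_of_crossGap_self_eq_zero hM hvM ?_
  rw [crossGap_equalizingBid M v hM le_rfl, Icc_eq_empty (by omega), sum_empty]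

lemma exists_equalizingBid_one_le (hM : 1 ≤ M) (hvM : 0 ≤ v M) :
    ∃ j ∈ Icc 1 M, equalizingBid M v 1 ≤ v j := by
  by_contra! h
  have hG := crossGap_equalizingBid_one_nonneg M v hM
  have hzero : ∑ j ∈ Icc 1 M, pos (v j - equalizingBid M v 1) = 0 :=
    sum_eq_zero fun j hj => pos_eq_zero (by linarith [h j hj])
  rw [crossGap, hzero] at hG
  have := h M (mem_Icc.2 ⟨hM, le_rfl⟩)
  push_cast at hG
  linarith

lemma Rpab_self (b : ℕ → ℝ) : Rpab M v b M = ∑ j ∈ Icc 1 M, b j := by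
  simp [Rpab, bext]

lemma Rpab_of_lt (b : ℕ → ℝ) {k : ℕ} (hk : k < M) :
    Rpab M v b k = ∑ j ∈ Icc 1 k, b j + (b (k + 1) + crossGap M v (k + 1) (b (k + 1))) := by
  rw [Rpab, bext, if_pos (Nat.succ_le_of_lt hk), crossGap, sum_sub_distrib, sum_const,
    Nat.card_Icc, nsmul_eq_mul]
  push_cast
  ring

lemma Rpab_equalizingBid {k : ℕ} (hk : k ≤ M) :
    Rpab M v (equalizingBid M v) k = ∑ j ∈ Icc 1 M, equalizingBid M v j := by
  rcases hk.lt_or_eq with hk | hk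
  · rw [Rpab_of_lt M v _ hk, crossGap_equalizingBid M v (by omega) hk,
      ← sum_Icc_eq_add_sum_Icc_succ hk, sum_Icc_one_add_sum_Icc_succ hk.le]
  · rw [hk, Rpab_self]

lemma Lpab_equalizingBid_le : Lpab M v (equalizingBid M v) ≤ ∑ j ∈ Icc 1 M, equalizingBid M v j :=
  sup'_le _ _ fun _ hk => (Rpab_equalizingBid M v (mem_Icc.1 hk).2).le

lemma add_crossGap_lt_add_crossGap {k : ℕ} {x c : ℝ} (hxc : x < c)
    (h : 1 ≤ k ∨ ∃ j ∈ Icc (k + 1) M, c ≤ v j) :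
    c + crossGap M v (k + 1) c < x + crossGap M v (k + 1) x := by
  have hle : ∀ j ∈ Icc (k + 1) M, pos (v j - c) ≤ pos (v j - x) :=
    fun j _ => pos_sub_le_pos_sub (v j) hxc.le
  rw [crossGap, crossGap]
  push_cast
  rcases h with hk | ⟨j, hj, hcj⟩
  · have hk' : (1 : ℝ) ≤ k := by exact_mod_cast hk
    nlinarith [sum_le_sum hle]
  · have hlt : pos (v j - c) < pos (v j - x) := by
      rw [pos_eq_self (sub_nonneg.2 hcj)]
      linarith [le_pos (v j - x)]
    have hk' : (0 : ℝ) ≤ k := k.cast_nonneg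
    nlinarith [sum_lt_sum hle ⟨j, hj, hlt⟩]

lemma equalizingBid_le_of_forall_Rpab_le (hM : 1 ≤ M) (hvM : 0 ≤ v M) {b : ℕ → ℝ}
    (hb : ∀ k ≤ M, Rpab M v b k ≤ ∑ j ∈ Icc 1 M, equalizingBid M v j) :
    ∀ j ∈ Icc 1 M, equalizingBid M v j ≤ b j := by
  suffices ∀ k ≤ M, ∀ j ∈ Icc 1 k, equalizingBid M v j ≤ b j from this M le_rfl
  intro k
  induction k with
  | zero => simp
  | succ k ih =>
    intro hk j hj
    rcases (mem_Icc.1 hj).2.lt_or_eq with hjk | rfl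
    · exact ih (by omega) j (mem_Icc.2 ⟨(mem_Icc.1 hj).1, by omega⟩)
    by_contra! hlt
    have hprefix := sum_le_sum (ih (by omega))
    have hR := hb k (by omega)
    rw [← Rpab_equalizingBid M v (by omega : k ≤ M), Rpab_of_lt M v b (by omega),
      Rpab_of_lt M v _ (by omega)] at hR
    have hstrict : 1 ≤ k ∨ ∃ j ∈ Icc (k + 1) M, equalizingBid M v (k + 1) ≤ v j := by
      rcases k.eq_zero_or_pos with rfl | hk0
      · exact Or.inr (exists_equalizingBid_one_le M v hM hvM)
      · exact Or.inl hk0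
    have hgap := add_crossGap_lt_add_crossGap M v hlt hstrict
    linarith

end EqualizingBid

lemma IsMinimaxPAB.eqOn_equalizingBid {M : ℕ} {v b : ℕ → ℝ} (hM : 1 ≤ M) (hvM : 0 ≤ v M)
    (h : IsMinimaxPAB M v b) : ∀ j ∈ Icc 1 M, b j = equalizingBid M v j := by
  have hR : ∀ k ≤ M, Rpab M v b k ≤ ∑ j ∈ Icc 1 M, equalizingBid M v j := fun k hk =>
    (le_sup' (Rpab M v b) (mem_Icc.2 ⟨k.zero_le, hk⟩)).trans
      ((h.2 _ (isBid_equalizingBid M v hM)).trans (Lpab_equalizingBid_le M v))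
  have hle := equalizingBid_le_of_forall_Rpab_le M v hM hvM hR
  have hsum : ∑ j ∈ Icc 1 M, equalizingBid M v j = ∑ j ∈ Icc 1 M, b j :=
    le_antisymm (sum_le_sum hle) (Rpab_self M v b ▸ hR M le_rfl)
  exact fun j hj => ((sum_eq_sum_iff_of_le hle).1 hsum j hj).symm

theorem lab_bids_steeper_than_pab_bids_general
    (M : ℕ) (hM : 1 ≤ M) (v : ℕ → ℝ) (hv : IsVal M v)
    (bLAB : ℕ → ℝ) (hLAB : IsCrossCond M v bLAB)
    (bPAB : ℕ → ℝ) (hPAB : IsMinimaxPAB M v bPAB) :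
    (bPAB 1 - bPAB M) / M ≤ (bLAB 1 - bLAB M) / M ∧
    bLAB M = v M / (M + 1) ∧ bPAB M = v M / (M + 1) ∧
    bPAB 1 ≤ bLAB 1 := by
  have hPAB_eq := hPAB.eqOn_equalizingBid hM hv.2
  have hPM : bPAB M = v M / (M + 1) := by
    rw [hPAB_eq M (mem_Icc.2 ⟨hM, le_rfl⟩), equalizingBid_self M v hM hv.2]
  have hLM : bLAB M = v M / (M + 1) :=
    eq_div_of_crossGap_self_eq_zero hM hv.2 (hLAB.crossGap_eq_zero (mem_Icc.2 ⟨hM, le_rfl⟩))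
  have h1 : bPAB 1 ≤ bLAB 1 := by
    rw [hPAB_eq 1 (mem_Icc.2 ⟨le_rfl, hM⟩)]
    refine (strictAnti_crossGap M v le_rfl).le_iff_ge.1 ?_
    rw [hLAB.crossGap_eq_zero (mem_Icc.2 ⟨le_rfl, hM⟩)]
    exact crossGap_equalizingBid_one_nonneg M v hM
  refine ⟨?_, hLM, hPM, h1⟩
  rw [hPM, hLM]
  gcongr

/-- the cross-conditional regret minimizing bid in the uniform-price auction
is on average steeper than the unique minimax-loss bid in the pay-as-bid auction; in fact
both auctions give `b_M = v_M/(M+1)`, and `b^LAB_1 ≥ b^PAB_1`. -/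
theorem lab_bids_steeper_than_pab_bids
    (M : ℕ) (hM : 1 ≤ M) (v : ℕ → ℝ) (hv : IsVal M v)
    (bLAB : ℕ → ℝ) (hLABbid : IsBid M bLAB) (hLAB : IsCrossCond M v bLAB)
    (bPAB : ℕ → ℝ) (hPAB : IsMinimaxPAB M v bPAB) :
    (bPAB 1 - bPAB M) / M ≤ (bLAB 1 - bLAB M) / M ∧
    bLAB M = v M / (M + 1) ∧ bPAB M = v M / (M + 1) ∧
    bPAB 1 ≤ bLAB 1 :=
  lab_bids_steeper_than_pab_bids_general M hM v hv bLAB hLAB bPAB hPAB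

end
end

section
/- Let integers M_b ≥ 1 and M_q ≥ 1 be given. Suppose (q,b) is a minimax-loss M_b-point bid in the constrained pay-as-bid auction (minimizing L^PAB over all M_b-point bids), and let L* be the minimum of L^PAB over M_b-point bids whose quantity points all lie on the grid {0, Q/M_q, 2Q/M_q, …, Q}. Define (q',b') by q'_k = ⌊M_q·q_k/Q⌋·(Q/M_q) and b'_k = b_k for all k. Then (q',b') is an M_b-point bid with all quantity points on the grid, and L* ≤ L^PAB(q',b') ≤ L* + ∫_0^{Q/M_q} v(x) dx. -/
open MeasureTheory intervalIntegral

noncomputable section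

/-- An `M`-point bid `(q,b)`: `0 = q_0 ≤ q_1 ≤ … ≤ q_M ≤ Q` and `b_1 ≥ … ≥ b_M ≥ 0`. -/
def IsBidPts (Q : ℝ) (M : ℕ) (q b : ℕ → ℝ) : Prop :=
  q 0 = 0 ∧ (∀ k, k < M → q k ≤ q (k + 1)) ∧ q M ≤ Q ∧
    (∀ k, 1 ≤ k → k < M → b (k + 1) ≤ b k) ∧ 0 ≤ b M

/-- The step bid function induced by the `M`-point bid `(q,b)`:
`b̂(x) = b_k` for `q_{k−1} ≤ x < q_k` and `b̂(x) = 0` for `x ≥ q_M`. -/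
def bhat (M : ℕ) (q b : ℕ → ℝ) (x : ℝ) : ℝ :=
  ∑ k ∈ Finset.Icc 1 M, if q (k - 1) ≤ x ∧ x < q k then b k else 0

/-- Conditional regret at quantity `t` in the bidpoint-constrained pay-as-bid auction:
`R^PAB_t(q,b) = ∫_0^t (b̂(x) − b̂(t)) dx + ∫_t^Q (v(x) − b̂(t))₊ dx`. -/
def Rcpab (Q : ℝ) (M : ℕ) (v : ℝ → ℝ) (q b : ℕ → ℝ) (t : ℝ) : ℝ :=
  (∫ x in (0:ℝ)..t, (bhat M q b x - bhat M q b t))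
    + ∫ x in t..Q, pos (v x - bhat M q b t)

/-- Loss in the bidpoint-constrained pay-as-bid auction:
`L^PAB(q,b) = sup_{t ∈ [0,Q]} R^PAB_t(q,b)`. -/
def Lcpab (Q : ℝ) (M : ℕ) (v : ℝ → ℝ) (q b : ℕ → ℝ) : ℝ :=
  sSup {r : ℝ | ∃ t ∈ Set.Icc (0:ℝ) Q, r = Rcpab Q M v q b t}

/-- A minimax-loss `M`-point bid in the constrained pay-as-bid auction. -/
def IsMinimaxCPAB (Q : ℝ) (M : ℕ) (v : ℝ → ℝ) (q b : ℕ → ℝ) : Prop :=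
  IsBidPts Q M q b ∧ ∀ q' b', IsBidPts Q M q' b' → Lcpab Q M v q b ≤ Lcpab Q M v q' b'

/-- Loss in the bidpoint-constrained uniform-price auction:
`L^LAB(q,b) = max( max_{1≤k≤M} max( q_k·b_k , ∫_{q_{k−1}}^Q (v(x) − b_k)₊ dx ) , ∫_{q_M}^Q v )`. -/
def Lclab (Q : ℝ) (M : ℕ) (hM : 1 ≤ M) (v : ℝ → ℝ) (q b : ℕ → ℝ) : ℝ :=
  max ((Finset.Icc 1 M).sup' (Finset.nonempty_Icc.mpr hM)
        (fun k => max (q k * b k) (∫ x in q (k - 1)..Q, pos (v x - b k))))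
      (∫ x in q M..Q, v x)

/-- A minimax-loss `M`-point bid in the constrained uniform-price auction. -/
def IsMinimaxCLAB (Q : ℝ) (M : ℕ) (hM : 1 ≤ M) (v : ℝ → ℝ) (q b : ℕ → ℝ) : Prop :=
  IsBidPts Q M q b ∧
    ∀ q' b', IsBidPts Q M q' b' → Lclab Q M hM v q b ≤ Lclab Q M hM v q' b'

/-- The marginal value function: weakly decreasing, nonnegative and integrable on `[0,Q]`. -/
def IsValueFn (Q : ℝ) (v : ℝ → ℝ) : Prop :=
  AntitoneOn v (Set.Icc 0 Q) ∧ (∀ x ∈ Set.Icc (0:ℝ) Q, 0 ≤ v x) ∧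
    IntervalIntegrable v volume 0 Q

/-- Quantity points all lie on the grid `{0, Q/M_q, 2Q/M_q, …, Q}`. -/
def OnGrid (Q : ℝ) (Mq M : ℕ) (q : ℕ → ℝ) : Prop :=
  ∀ k ≤ M, ∃ j : ℕ, j ≤ Mq ∧ q k = (j : ℝ) * (Q / Mq)


/-! Write `δ = Q / M_q`. Rounding down moves every quantity point left by less than `δ`, so the
rounded bid function `b̂'` lies below `b̂`, while `b̂(s) ≤ b̂'(t)` at `s = min Q (t + δ)`. Comparing
`R_t(q',b)` with `R_s(q,b)`: the payments on `[0,t]` are smaller, the surplus on `[s,Q]` is smaller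
because the bid level `b̂'(t)` is higher, and what is left over is the surplus on `[t,s]`, at most
`∫_t^s v ≤ ∫_0^δ v` since `v` is decreasing. So `L(q',b) ≤ L(q,b) + ∫_0^δ v`, and
`L(q,b) ≤ L* ≤ L(q',b)` because grid bids are bids and `(q',b)` is a grid bid. -/

section Bid

variable {Q : ℝ} {M : ℕ} {q b : ℕ → ℝ}

lemma IsBidPts.q_mono (h : IsBidPts Q M q b) {j k : ℕ} (hjk : j ≤ k) (hk : k ≤ M) :
    q j ≤ q k := by
  induction k, hjk using Nat.le_induction with
  | base => exact le_rfl
  | succ n _ ih => exact (ih (by omega)).trans (h.2.1 n (by omega))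

lemma IsBidPts.b_anti (h : IsBidPts Q M q b) {j k : ℕ} (hj : 1 ≤ j) (hjk : j ≤ k) (hk : k ≤ M) :
    b k ≤ b j := by
  induction k, hjk using Nat.le_induction with
  | base => exact le_rfl
  | succ n hjn ih => exact (h.2.2.2.1 n (by omega) (by omega)).trans (ih (by omega))

lemma IsBidPts.q_nonneg (h : IsBidPts Q M q b) {k : ℕ} (hk : k ≤ M) : 0 ≤ q k :=
  h.1 ▸ h.q_mono (Nat.zero_le k) hk

lemma IsBidPts.b_nonneg (h : IsBidPts Q M q b) {k : ℕ} (hk : k ∈ Finset.Icc 1 M) : 0 ≤ b k :=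
  h.2.2.2.2.trans (h.b_anti (Finset.mem_Icc.1 hk).1 (Finset.mem_Icc.1 hk).2 le_rfl)

lemma IsBidPts.bhat_eq_of_mem_Ico (h : IsBidPts Q M q b) {k : ℕ} (hk : k ∈ Finset.Icc 1 M)
    {x : ℝ} (hx : x ∈ Set.Ico (q (k - 1)) (q k)) : bhat M q b x = b k := by
  rw [bhat, Finset.sum_eq_single_of_mem k hk fun j hj hjk => if_neg ?_,
    if_pos (Set.mem_Ico.1 hx)]
  rintro ⟨hjx, hxj⟩
  rw [Finset.mem_Icc] at hj hk
  rcases Nat.lt_or_gt_of_ne hjk with hlt | hgt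
  · exact (hxj.trans_le ((h.q_mono (by omega) (by omega)).trans hx.1)).false
  · exact (hx.2.trans_le ((h.q_mono (by omega) (by omega)).trans hjx)).false

lemma IsBidPts.bhat_eq_zero (h : IsBidPts Q M q b) {x : ℝ} (hx : q M ≤ x) :
    bhat M q b x = 0 :=
  Finset.sum_eq_zero fun _ hk => if_neg fun hxk =>
    (hxk.2.trans_le ((h.q_mono (Finset.mem_Icc.1 hk).2 le_rfl).trans hx)).false

lemma IsBidPts.bhat_nonneg (h : IsBidPts Q M q b) (x : ℝ) : 0 ≤ bhat M q b x :=
  Finset.sum_nonneg fun k hk => by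
    split_ifs
    exacts [h.b_nonneg hk, le_rfl]

lemma IsBidPts.exists_mem_Ico (h : IsBidPts Q M q b) {x : ℝ} (hx : 0 ≤ x) (hxM : x < q M) :
    ∃ k ∈ Finset.Icc 1 M, x ∈ Set.Ico (q (k - 1)) (q k) := by
  classical
  have hex : ∃ j, x < q j := ⟨M, hxM⟩
  have hpos : 0 < Nat.find hex := Nat.pos_of_ne_zero fun h0 =>
    (Nat.find_spec hex).not_ge (by rw [h0, h.1]; exact hx)
  exact ⟨Nat.find hex, Finset.mem_Icc.2 ⟨hpos, Nat.find_le hxM⟩,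
    not_lt.1 (Nat.find_min hex (by omega)), Nat.find_spec hex⟩

lemma IsBidPts.bhat_le (h : IsBidPts Q M q b) {k : ℕ} (hk : k ∈ Finset.Icc 1 M) {x : ℝ}
    (hx : q (k - 1) ≤ x) : bhat M q b x ≤ b k := by
  rcases le_or_gt (q M) x with hxM | hxM
  · exact (h.bhat_eq_zero hxM).trans_le (h.b_nonneg hk)
  obtain ⟨j, hj, hxj⟩ := h.exists_mem_Ico ((h.q_nonneg (by grind)).trans hx) hxM
  rw [h.bhat_eq_of_mem_Ico hj hxj]
  rw [Finset.mem_Icc] at hj hk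
  have hkj : k ≤ j := by
    by_contra! hjk
    exact (hxj.2.trans_le ((h.q_mono (by omega) (by omega)).trans hx)).false
  exact h.b_anti hk.1 hkj hj.2

lemma IsBidPts.le_bhat (h : IsBidPts Q M q b) {k : ℕ} (hk : k ∈ Finset.Icc 1 M) {x : ℝ}
    (hx0 : 0 ≤ x) (hx : x < q k) : b k ≤ bhat M q b x := by
  rw [Finset.mem_Icc] at hk
  obtain ⟨j, hj, hxj⟩ := h.exists_mem_Ico hx0 (hx.trans_le (h.q_mono hk.2 le_rfl))
  rw [h.bhat_eq_of_mem_Ico hj hxj]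
  rw [Finset.mem_Icc] at hj
  have hjk : j ≤ k := by
    by_contra! hkj
    exact (hx.trans_le ((h.q_mono (by omega) (by omega)).trans hxj.1)).false
  exact h.b_anti hj.1 hjk hk.2

lemma IsBidPts.bhat_antitoneOn (h : IsBidPts Q M q b) : AntitoneOn (bhat M q b) (Set.Ici 0) := by
  intro x hx y _ hxy
  rcases le_or_gt (q M) y with hyM | hyM
  · exact (h.bhat_eq_zero hyM).trans_le (h.bhat_nonneg x)
  obtain ⟨k, hk, hyk⟩ := h.exists_mem_Ico (le_trans hx hxy) hyM
  rw [h.bhat_eq_of_mem_Ico hk hyk]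
  exact h.le_bhat hk hx (hxy.trans_lt hyk.2)

lemma IsBidPts.intervalIntegrable_bhat (h : IsBidPts Q M q b) {x y : ℝ} (hx : 0 ≤ x)
    (hy : 0 ≤ y) : IntervalIntegrable (bhat M q b) volume x y :=
  (h.bhat_antitoneOn.mono fun _ hz => (le_min hx hy).trans hz.1).intervalIntegrable

variable {q' : ℕ → ℝ}

lemma IsBidPts.bhat_le_bhat (h : IsBidPts Q M q b) (h' : IsBidPts Q M q' b)
    (hle : ∀ k ≤ M, q' k ≤ q k) {x : ℝ} (hx : 0 ≤ x) : bhat M q' b x ≤ bhat M q b x := by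
  rcases le_or_gt (q' M) x with hxM | hxM
  · exact (h'.bhat_eq_zero hxM).trans_le (h.bhat_nonneg x)
  obtain ⟨k, hk, hxk⟩ := h'.exists_mem_Ico hx hxM
  rw [h'.bhat_eq_of_mem_Ico hk hxk]
  exact h.le_bhat hk hx (hxk.2.trans_le (hle k (Finset.mem_Icc.1 hk).2))

lemma IsBidPts.bhat_add_le_bhat (h : IsBidPts Q M q b) (h' : IsBidPts Q M q' b) {δ : ℝ}
    (hδ : ∀ k ≤ M, q k ≤ q' k + δ) {x : ℝ} (hx : 0 ≤ x) :
    bhat M q b (x + δ) ≤ bhat M q' b x := by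
  rcases le_or_gt (q' M) x with hxM | hxM
  · rw [h.bhat_eq_zero (by linarith [hδ M le_rfl])]
    exact h'.bhat_nonneg x
  obtain ⟨k, hk, hxk⟩ := h'.exists_mem_Ico hx hxM
  rw [h'.bhat_eq_of_mem_Ico hk hxk]
  exact h.bhat_le hk (by linarith [hδ (k - 1) (by grind), hxk.1])

end Bid

section Regret

variable {Q : ℝ} {v f g : ℝ → ℝ}

/-- `Rcpab Q M v q b = regret Q v (bhat M q b)` holds by `rfl`, which is how the lemmas below
are applied to `Rcpab`. -/
def regret (Q : ℝ) (v f : ℝ → ℝ) (t : ℝ) : ℝ :=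
  (∫ x in (0:ℝ)..t, (f x - f t)) + ∫ x in t..Q, pos (v x - f t)

lemma IntervalIntegrable.pos_sub_const {a c : ℝ} (hv : IntervalIntegrable v volume a c) (r : ℝ) :
    IntervalIntegrable (fun x => pos (v x - r)) volume a c :=
  have hvr : IntervalIntegrable (fun x => v x - r) volume a c := hv.sub intervalIntegrable_const
  ⟨hvr.1.sup integrableOn_zero, hvr.2.sup integrableOn_zero⟩

lemma regret_eq {t : ℝ} (hf : IntervalIntegrable f volume 0 t) :
    regret Q v f t = (∫ x in (0:ℝ)..t, f x) - t * f t + ∫ x in t..Q, pos (v x - f t) := by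
  rw [regret, intervalIntegral.integral_sub hf intervalIntegrable_const,
    intervalIntegral.integral_const, smul_eq_mul, sub_zero]

lemma regret_nonneg {t : ℝ} (ht : t ∈ Set.Icc 0 Q) (hf : ∀ x ∈ Set.Icc 0 t, f t ≤ f x) :
    0 ≤ regret Q v f t :=
  add_nonneg (intervalIntegral.integral_nonneg ht.1 fun x hx => sub_nonneg.2 (hf x hx))
    (intervalIntegral.integral_nonneg ht.2 fun _ _ => le_max_right _ _)

lemma regret_le {t : ℝ} (ht : t ∈ Set.Icc 0 Q) (hf : AntitoneOn f (Set.Icc 0 Q))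
    (hf0 : 0 ≤ f t) (hv : IntervalIntegrable v volume 0 Q) (hv0 : ∀ x ∈ Set.Icc 0 Q, 0 ≤ v x) :
    regret Q v f t ≤ Q * f 0 + ∫ x in (0:ℝ)..Q, v x := by
  have h0t : Set.uIcc 0 t ⊆ Set.Icc 0 Q := by
    rw [Set.uIcc_of_le ht.1]
    exact Set.Icc_subset_Icc_right ht.2
  have hft : f t ≤ f 0 := hf ⟨le_rfl, ht.1.trans ht.2⟩ ⟨ht.1, ht.2⟩ ht.1
  have hpay : (∫ x in (0:ℝ)..t, (f x - f t)) ≤ Q * f 0 := calc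
    _ ≤ ∫ _ in (0:ℝ)..t, f 0 :=
      intervalIntegral.integral_mono_on ht.1
        ((hf.mono h0t).intervalIntegrable.sub intervalIntegrable_const) intervalIntegrable_const
        fun x hx => by linarith [hf ⟨le_rfl, ht.1.trans ht.2⟩ (h0t (Set.Icc_subset_uIcc hx)) hx.1]
    _ = t * f 0 := by simp
    _ ≤ Q * f 0 := mul_le_mul_of_nonneg_right ht.2 (hf0.trans hft)
  have hvt : IntervalIntegrable v volume t Q :=
    hv.mono_set (Set.uIcc_subset_uIcc_right (Set.mem_uIcc_of_le ht.1 ht.2))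
  have hsurplus : (∫ x in t..Q, pos (v x - f t)) ≤ ∫ x in (0:ℝ)..Q, v x := calc
    _ ≤ ∫ x in t..Q, v x :=
      intervalIntegral.integral_mono_on ht.2 (hvt.pos_sub_const _) hvt fun x hx =>
        max_le (sub_le_self _ hf0) (hv0 x ⟨ht.1.trans hx.1, hx.2⟩)
    _ ≤ ∫ x in (0:ℝ)..Q, v x :=
      intervalIntegral.integral_mono_interval ht.1 ht.2 le_rfl
        (ae_restrict_of_forall_mem measurableSet_Ioc fun x hx =>
          hv0 x (Set.Ioc_subset_Icc_self hx)) hv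
  exact add_le_add hpay hsurplus

lemma regret_le_regret_add {t s : ℝ} (ht : 0 ≤ t) (hts : t ≤ s) (hsQ : s ≤ Q)
    (hf : IntervalIntegrable f volume 0 s) (hg : IntervalIntegrable g volume 0 t)
    (hv : IntervalIntegrable v volume t Q) (hv0 : ∀ x ∈ Set.Icc t s, 0 ≤ v x)
    (hgf : ∀ x ∈ Set.Icc 0 t, g x ≤ f x) (hfs : ∀ x ∈ Set.Icc t s, f s ≤ f x)
    (hfg : f s ≤ g t) (hg0 : 0 ≤ g t) :
    regret Q v g t ≤ regret Q v f s + ∫ x in t..s, v x := by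
  have ht_mem : t ∈ Set.uIcc 0 s := Set.mem_uIcc_of_le ht hts
  have hs_mem : s ∈ Set.uIcc t Q := Set.mem_uIcc_of_le hts hsQ
  have hf0t := hf.mono_set (Set.uIcc_subset_uIcc_left ht_mem)
  have hfts := hf.mono_set (Set.uIcc_subset_uIcc_right ht_mem)
  have hvts := hv.mono_set (Set.uIcc_subset_uIcc_left hs_mem)
  have hvsQ := hv.mono_set (Set.uIcc_subset_uIcc_right hs_mem)
  have hpay : (∫ x in (0:ℝ)..t, g x) ≤ ∫ x in (0:ℝ)..t, f x :=
    intervalIntegral.integral_mono_on ht hg hf0t hgf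
  have hpay' : (s - t) * f s ≤ ∫ x in t..s, f x := by
    simpa using intervalIntegral.integral_mono_on hts intervalIntegrable_const hfts hfs
  have hsplit_f := intervalIntegral.integral_add_adjacent_intervals hf0t hfts
  have hsplit_v := intervalIntegral.integral_add_adjacent_intervals
    (hvts.pos_sub_const (g t)) (hvsQ.pos_sub_const (g t))
  have hnear : (∫ x in t..s, pos (v x - g t)) ≤ ∫ x in t..s, v x :=
    intervalIntegral.integral_mono_on hts (hvts.pos_sub_const _) hvts fun x hx =>
      max_le (sub_le_self _ hg0) (hv0 x hx)
  have hfar : (∫ x in s..Q, pos (v x - g t)) ≤ ∫ x in s..Q, pos (v x - f s) :=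
    intervalIntegral.integral_mono_on hsQ (hvsQ.pos_sub_const _) (hvsQ.pos_sub_const _)
      fun x _ => max_le_max (by linarith) le_rfl
  rw [regret_eq hg, regret_eq hf, ← hsplit_v, ← hsplit_f]
  linarith [mul_le_mul_of_nonneg_left hfg ht]

end Regret

lemma AntitoneOn.integral_le_integral_zero {v : ℝ → ℝ} {Q t s δ : ℝ}
    (hv : AntitoneOn v (Set.Icc 0 Q)) (hv0 : ∀ x ∈ Set.Icc 0 Q, 0 ≤ v x) (ht : 0 ≤ t)
    (hts : t ≤ s) (hsδ : s ≤ t + δ) (hsQ : s ≤ Q) (hδQ : δ ≤ Q) :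
    ∫ x in t..s, v x ≤ ∫ x in (0:ℝ)..δ, v x := by
  have hQ : 0 ≤ Q := by linarith
  have hint : ∀ a ∈ Set.Icc 0 Q, IntervalIntegrable v volume 0 a := fun a ha =>
    (hv.mono (Set.uIcc_subset_Icc ⟨le_rfl, hQ⟩ ha)).intervalIntegrable
  have hshift : IntervalIntegrable (fun x => v (x + t)) volume 0 (s - t) := by
    refine AntitoneOn.intervalIntegrable fun x hx y hy hxy => hv ?_ ?_ (by linarith)
    all_goals
      rw [Set.uIcc_of_le (by linarith)] at hx hy
      constructor <;> linarith [hx.1, hx.2, hy.1, hy.2]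
  calc ∫ x in t..s, v x = ∫ x in (0:ℝ)..(s - t), v (x + t) := by
        rw [intervalIntegral.integral_comp_add_right]; simp
    _ ≤ ∫ x in (0:ℝ)..(s - t), v x :=
        intervalIntegral.integral_mono_on (by linarith) hshift
          (hint _ ⟨by linarith, by linarith⟩) fun x hx =>
          hv ⟨hx.1, by linarith [hx.2]⟩ ⟨by linarith [hx.1], by linarith [hx.2]⟩ (by linarith)
    _ ≤ ∫ x in (0:ℝ)..δ, v x :=
        intervalIntegral.integral_mono_interval le_rfl (by linarith) (by linarith)
          (ae_restrict_of_forall_mem measurableSet_Ioc fun x hx =>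
            hv0 x ⟨hx.1.le, hx.2.trans hδQ⟩) (hint _ ⟨by linarith, hδQ⟩)

section Loss

variable {Q : ℝ} {M : ℕ} {v : ℝ → ℝ} {q b : ℕ → ℝ}

lemma IsBidPts.bddAbove_Rcpab (h : IsBidPts Q M q b) (hv : IsValueFn Q v) :
    BddAbove {r : ℝ | ∃ t ∈ Set.Icc (0:ℝ) Q, r = Rcpab Q M v q b t} := by
  refine ⟨Q * bhat M q b 0 + ∫ x in (0:ℝ)..Q, v x, ?_⟩
  rintro _ ⟨t, ht, rfl⟩
  exact regret_le ht (h.bhat_antitoneOn.mono fun _ hx => hx.1) (h.bhat_nonneg t) hv.2.2 hv.2.1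

lemma IsBidPts.Rcpab_le_Lcpab (h : IsBidPts Q M q b) (hv : IsValueFn Q v) {t : ℝ}
    (ht : t ∈ Set.Icc 0 Q) : Rcpab Q M v q b t ≤ Lcpab Q M v q b :=
  le_csSup (h.bddAbove_Rcpab hv) ⟨t, ht, rfl⟩

lemma IsBidPts.Lcpab_nonneg (h : IsBidPts Q M q b) : 0 ≤ Lcpab Q M v q b := by
  refine Real.sSup_nonneg ?_
  rintro _ ⟨t, ht, rfl⟩
  exact regret_nonneg ht fun x hx => h.bhat_antitoneOn hx.1 ht.1 hx.2

lemma IsBidPts.Lcpab_le_Lcpab_add {q' : ℕ → ℝ} {δ : ℝ} (h : IsBidPts Q M q b)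
    (h' : IsBidPts Q M q' b) (hv : IsValueFn Q v) (hle : ∀ k ≤ M, q' k ≤ q k)
    (hδ : ∀ k ≤ M, q k ≤ q' k + δ) (hδ0 : 0 ≤ δ) (hδQ : δ ≤ Q) :
    Lcpab Q M v q' b ≤ Lcpab Q M v q b + ∫ x in (0:ℝ)..δ, v x := by
  refine csSup_le ⟨_, 0, ⟨le_rfl, hδ0.trans hδQ⟩, rfl⟩ ?_
  rintro _ ⟨t, ht, rfl⟩
  obtain ⟨s, hs⟩ : ∃ s, s = min Q (t + δ) := ⟨_, rfl⟩
  have hts : t ≤ s := hs ▸ le_min ht.2 (by linarith)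
  have hsQ : s ≤ Q := hs ▸ min_le_left _ _
  have hs0 : 0 ≤ s := ht.1.trans hts
  have hst : bhat M q b s ≤ bhat M q' b t := by
    rcases min_cases Q (t + δ) with ⟨hmin, _⟩ | ⟨hmin, _⟩ <;> rw [hmin] at hs <;> rw [hs]
    · exact (h.bhat_eq_zero h.2.2.1).trans_le (h'.bhat_nonneg t)
    · exact h.bhat_add_le_bhat h' hδ ht.1
  calc Rcpab Q M v q' b t ≤ Rcpab Q M v q b s + ∫ x in t..s, v x :=
        regret_le_regret_add ht.1 hts hsQ (h.intervalIntegrable_bhat le_rfl hs0)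
          (h'.intervalIntegrable_bhat le_rfl ht.1)
          (hv.2.2.mono_set (Set.uIcc_subset_uIcc_right (Set.mem_uIcc_of_le ht.1 ht.2)))
          (fun x hx => hv.2.1 x ⟨ht.1.trans hx.1, hx.2.trans hsQ⟩)
          (fun x hx => h.bhat_le_bhat h' hle hx.1)
          (fun x hx => h.bhat_antitoneOn (ht.1.trans hx.1) hs0 hx.2) hst (h'.bhat_nonneg t)
    _ ≤ Lcpab Q M v q b + ∫ x in (0:ℝ)..δ, v x :=
        add_le_add (h.Rcpab_le_Lcpab hv ⟨hs0, hsQ⟩)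
          (hv.1.integral_le_integral_zero hv.2.1 ht.1 hts (hs ▸ min_le_right _ _) hsQ hδQ)

end Loss

section Grid

variable {Q δ : ℝ} {M : ℕ} {q b : ℕ → ℝ}

lemma IsBidPts.floor_div_mul (h : IsBidPts Q M q b) (hδ : 0 < δ) :
    IsBidPts Q M (fun k => (⌊q k / δ⌋ : ℝ) * δ) b := by
  refine ⟨by simp [h.1], fun k hk => ?_, ?_, h.2.2.2.1, h.2.2.2.2⟩
  · dsimp only
    gcongr
    exact h.2.1 k hk
  · exact (sub_nonneg.1 (Int.sub_floor_div_mul_nonneg _ hδ)).trans h.2.2.1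

lemma IsBidPts.onGrid_floor_div_mul (h : IsBidPts Q M q b) (hQ : 0 < Q) {N : ℕ} (hN : 1 ≤ N) :
    OnGrid Q N M (fun k => (⌊q k / (Q / N)⌋ : ℝ) * (Q / N)) := by
  intro k hk
  have hδ : 0 < Q / N := div_pos hQ (by exact_mod_cast hN)
  have hqk : 0 ≤ q k / (Q / N) := div_nonneg (h.q_nonneg hk) hδ.le
  refine ⟨⌊q k / (Q / N)⌋₊, Nat.floor_le_of_le ?_, by rw [natCast_floor_eq_intCast_floor hqk]⟩
  rw [div_le_iff₀ hδ, mul_div_cancel₀ _ (by positivity)]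
  exact (h.q_mono hk le_rfl).trans h.2.2.1

end Grid

theorem approximate_minimax_loss_pab_general
    (Q : ℝ) (hQ : 0 < Q) (Mb Mq : ℕ) (hMq : 1 ≤ Mq)
    (v : ℝ → ℝ) (hv : IsValueFn Q v)
    (q b : ℕ → ℝ) (hqb : IsMinimaxCPAB Q Mb v q b)
    (Lstar : ℝ)
    (hLstar : Lstar = sInf {L : ℝ | ∃ q' b', IsBidPts Q Mb q' b' ∧ OnGrid Q Mq Mb q' ∧
      L = Lcpab Q Mb v q' b'})
    (q' : ℕ → ℝ) (hq' : ∀ k, q' k = (⌊(Mq : ℝ) * q k / Q⌋ : ℝ) * (Q / Mq)) :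
    IsBidPts Q Mb q' b ∧ OnGrid Q Mq Mb q' ∧
    Lstar ≤ Lcpab Q Mb v q' b ∧
    Lcpab Q Mb v q' b ≤ Lstar + ∫ x in (0:ℝ)..(Q / Mq), v x := by
  set S := {L : ℝ | ∃ q' b', IsBidPts Q Mb q' b' ∧ OnGrid Q Mq Mb q' ∧ L = Lcpab Q Mb v q' b'}
  obtain ⟨hbid, hmin⟩ := hqb
  have hδ : 0 < Q / Mq := div_pos hQ (by exact_mod_cast hMq)
  obtain rfl : q' = fun k => (⌊q k / (Q / Mq)⌋ : ℝ) * (Q / Mq) := by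
    funext k
    rw [hq' k, div_div_eq_mul_div, mul_comm (q k)]
  have hbid' := hbid.floor_div_mul hδ
  have hgrid := hbid.onGrid_floor_div_mul hQ hMq
  have hround := hbid.Lcpab_le_Lcpab_add hbid' hv
    (fun k _ => sub_nonneg.1 (Int.sub_floor_div_mul_nonneg (q k) hδ))
    (fun k _ => by linarith [Int.sub_floor_div_mul_lt (q k) hδ]) hδ.le
    (div_le_self hQ.le (by exact_mod_cast hMq))
  have hmem : Lcpab Q Mb v _ b ∈ S := ⟨_, b, hbid', hgrid, rfl⟩
  have hLstar_le : Lstar ≤ Lcpab Q Mb v _ b := hLstar ▸ csInf_le ⟨0, by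
    rintro _ ⟨_, _, hb, -, rfl⟩
    exact hb.Lcpab_nonneg⟩ hmem
  have hle_Lstar : Lcpab Q Mb v q b ≤ Lstar := hLstar ▸ le_csInf ⟨_, hmem⟩ (by
    rintro _ ⟨q'', b'', hb, -, rfl⟩
    exact hmin q'' b'' hb)
  exact ⟨hbid', hgrid, hLstar_le, by linarith⟩

/-- rounding the quantity points of a minimax-loss constrained pay-as-bid
bid down to the grid `{0, Q/M_q, …, Q}` yields a feasible grid bid whose loss exceeds the
grid-constrained minimax loss `L*` by at most `∫_0^{Q/M_q} v`. -/
theorem approximate_minimax_loss_pab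
    (Q : ℝ) (hQ : 0 < Q) (Mb Mq : ℕ) (hMb : 1 ≤ Mb) (hMq : 1 ≤ Mq)
    (v : ℝ → ℝ) (hv : IsValueFn Q v)
    (q b : ℕ → ℝ) (hqb : IsMinimaxCPAB Q Mb v q b)
    (Lstar : ℝ)
    (hLstar : Lstar = sInf {L : ℝ | ∃ q' b', IsBidPts Q Mb q' b' ∧ OnGrid Q Mq Mb q' ∧
      L = Lcpab Q Mb v q' b'})
    (q' : ℕ → ℝ) (hq' : ∀ k, q' k = (⌊(Mq : ℝ) * q k / Q⌋ : ℝ) * (Q / Mq)) :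
    IsBidPts Q Mb q' b ∧ OnGrid Q Mq Mb q' ∧
    Lstar ≤ Lcpab Q Mb v q' b ∧
    Lcpab Q Mb v q' b ≤ Lstar + ∫ x in (0:ℝ)..(Q / Mq), v x :=
  approximate_minimax_loss_pab_general Q hQ Mb Mq hMq v hv q b hqb Lstar hLstar q' hq'

end
end

section
/- Suppose the marginal value function is constant, v(x) = v > 0 for all x ∈ [0,Q], and the bidder may submit a single bid point (M = 1). Then the unique minimax-loss 1-point bid in the constrained uniform-price auction is q_1 = φ·Q and b_1 = φ·v, where φ = (√5 − 1)/2, and the minimax loss equals ((3 − √5)/2)·v·Q; at this bid the overbidding regret q_1·b_1, the underbidding regret at 0, namely (v − b_1)·Q, and the residual underbidding regret v·(Q − q_1) are all equal. -/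
noncomputable section

/-- Loss of a single-bidpoint bid `(q₁,b₁)` in the constrained uniform-price auction with
constant marginal value `v` on `[0,Q]`:
`L^LAB(q₁,b₁) = max( q₁·b₁ , (v − b₁)₊·Q , v·(Q − q₁) )`. -/
def L1 (Q v q₁ b₁ : ℝ) : ℝ := max (q₁ * b₁) (max (pos (v - b₁) * Q) (v * (Q - q₁)))

/-- The golden-ratio constant `φ = (√5 − 1)/2`. -/
def phi : ℝ := (Real.sqrt 5 - 1) / 2

lemma sqrt5_sq : Real.sqrt 5 * Real.sqrt 5 = 5 :=
  Real.mul_self_sqrt (by norm_num)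

lemma sqrt5_lt : Real.sqrt 5 < 3 := by
  nlinarith [sqrt5_sq, Real.sqrt_nonneg 5]

lemma sqrt5_gt : 2 < Real.sqrt 5 := by
  nlinarith [sqrt5_sq, Real.sqrt_nonneg 5]

lemma phi_pos : 0 < phi := by unfold phi; linarith [sqrt5_gt]

lemma phi_lt_one : phi < 1 := by unfold phi; linarith [sqrt5_lt]

lemma phi_sq : phi * phi = 1 - phi := by
  unfold phi; nlinarith [sqrt5_sq]

lemma L1_opt (Q v : ℝ) (hQ : 0 < Q) (hv : 0 < v) :
    L1 Q v (phi * Q) (phi * v) = (1 - phi) * v * Q := by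
  have h1 : (phi * Q) * (phi * v) = (1 - phi) * v * Q := by
    linear_combination (v * Q) * phi_sq
  have h2 : pos (v - phi * v) = (1 - phi) * v := by
    unfold pos
    rw [max_eq_left (by nlinarith [phi_lt_one])]
    ring
  have h3 : v * (Q - phi * Q) = (1 - phi) * v * Q := by ring
  unfold L1
  rw [h1, h2, h3, max_self, max_self]

lemma L1_lower (Q v : ℝ) (hQ : 0 < Q) (hv : 0 < v)
    (q b : ℝ) (hq0 : 0 ≤ q) (hqQ : q ≤ Q) (hb0 : 0 ≤ b) :
    (1 - phi) * v * Q ≤ L1 Q v q b := by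
  by_contra h
  push_neg at h
  unfold L1 at h
  rw [max_lt_iff, max_lt_iff] at h
  obtain ⟨h1, h2, h3⟩ := h
  have hpos : v - b ≤ pos (v - b) := le_max_left _ _
  have h2' : (v - b) * Q < (1 - phi) * v * Q := by
    calc (v - b) * Q ≤ pos (v - b) * Q := by nlinarith
    _ < _ := h2
  have hb : phi * v < b := by nlinarith
  have hq : phi * Q < q := by nlinarith
  have key : (phi * Q) * (phi * v) = (1 - phi) * v * Q := by
    linear_combination (v * Q) * phi_sq
  have hA : 0 < q - phi * Q := by linarith
  have hB : 0 < b - phi * v := by linarith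
  nlinarith [mul_pos hA hB, mul_pos phi_pos hQ, mul_pos phi_pos hv, key]

/-- with constant marginal value `v > 0` and a single bid point, the unique
minimax-loss bid is `(q₁, b₁) = (φQ, φv)` with `φ = (√5 − 1)/2`; minimax loss equals
`((3 − √5)/2)·v·Q`; and at this bid the overbidding regret `q₁·b₁`, underbidding regret
`(v − b₁)·Q`, and residual regret `v·(Q − q₁)` coincide. -/
theorem constrained_upa_single_bidpoint_constant_values
    (Q v : ℝ) (hQ : 0 < Q) (hv : 0 < v) :
    (0 ≤ phi * Q ∧ phi * Q ≤ Q ∧ 0 ≤ phi * v) ∧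
    (∀ q₁ b₁, 0 ≤ q₁ → q₁ ≤ Q → 0 ≤ b₁ → L1 Q v (phi * Q) (phi * v) ≤ L1 Q v q₁ b₁) ∧
    (∀ q₁ b₁, 0 ≤ q₁ → q₁ ≤ Q → 0 ≤ b₁ →
      (∀ q' b', 0 ≤ q' → q' ≤ Q → 0 ≤ b' → L1 Q v q₁ b₁ ≤ L1 Q v q' b') →
      q₁ = phi * Q ∧ b₁ = phi * v) ∧
    L1 Q v (phi * Q) (phi * v) = ((3 - Real.sqrt 5) / 2) * v * Q ∧
    (phi * Q) * (phi * v) = (v - phi * v) * Q ∧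
    (v - phi * v) * Q = v * (Q - phi * Q) := by
  have hφ0 := phi_pos
  have hφ1 := phi_lt_one
  have hopt := L1_opt Q v hQ hv
  refine ⟨⟨by positivity, by nlinarith, by positivity⟩, ?_, ?_, ?_, ?_, by ring⟩
  · intro q b hq0 hqQ hb0
    rw [hopt]
    exact L1_lower Q v hQ hv q b hq0 hqQ hb0
  · intro q b hq0 hqQ hb0 hmin
    have hle : L1 Q v q b ≤ (1 - phi) * v * Q := by
      rw [← hopt]
      exact hmin _ _ (by positivity) (by nlinarith) (by positivity)
    unfold L1 at hle
    rw [max_le_iff, max_le_iff] at hle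
    obtain ⟨h1, h2, h3⟩ := hle
    have hpos : v - b ≤ pos (v - b) := le_max_left _ _
    have h2' : (v - b) * Q ≤ (1 - phi) * v * Q := by nlinarith
    have hb : phi * v ≤ b := by nlinarith
    have hq : phi * Q ≤ q := by nlinarith
    have hqe : q = phi * Q := by
      refine le_antisymm ?_ hq
      have step : q * (phi * v) ≤ (phi * Q) * (phi * v) := by
        have h4 := mul_le_mul_of_nonneg_left hb hq0
        have key : (phi * Q) * (phi * v) = (1 - phi) * v * Q := by
          linear_combination (v * Q) * phi_sq
        nlinarith [h4, key, h1]
      exact le_of_mul_le_mul_right step (mul_pos phi_pos hv)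
    have hbe : b = phi * v := by
      refine le_antisymm ?_ hb
      have step : b * (phi * Q) ≤ (phi * v) * (phi * Q) := by
        have h4 := mul_le_mul_of_nonneg_right hq hb0
        have key : (phi * v) * (phi * Q) = (1 - phi) * v * Q := by
          linear_combination (v * Q) * phi_sq
        nlinarith [h4, key, h1]
      exact le_of_mul_le_mul_right step (mul_pos phi_pos hQ)
    exact ⟨hqe, hbe⟩
  · rw [hopt]
    unfold phi
    ring
  · linear_combination (v * Q) * phi_sq

end
end
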